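/- (Example 1, invariance of the Pareto front under relaxation.) Let f₁(x) = −(x₁−3)² − (x₂−4)², f₂(x) = −(x₁−4)² − (x₂−1)² on ℝ², and for any a < 1 and b > 5 let X₀' = {x ∈ ℝ² : a ≤ x₁ ≤ b, a ≤ x₂ ≤ b}. Then the set N' of efficient elements of the relaxed problem over X₀' equals the line segment {(3+t, 4−3t) : t ∈ [0,1]} joining (3,4) and (4,1); in particular N' is the same as the efficient set of the unrelaxed problem over X₀ = [1,5]², and the Pareto fronts of the relaxed and unrelaxed problems coincide. -/
import Mathlib


/-- The objective functions of Example 1: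
`f₁(x) = −(x₁−3)² − (x₂−4)²`, `f₂(x) = −(x₁−4)² − (x₂−1)²`. -/
noncomputable def fEx (x : ℝ × ℝ) : ℝ × ℝ :=
  (-(x.1 - 3) ^ 2 - (x.2 - 4) ^ 2, -(x.1 - 4) ^ 2 - (x.2 - 1) ^ 2)

/-- Dominance relation for the biobjective maximization problem:
`x ≺ x'` iff `f₁(x) ≤ f₁(x')`, `f₂(x) ≤ f₂(x')` and `f(x) ≠ f(x')`. -/
def DomEx (x x' : ℝ × ℝ) : Prop :=
  (fEx x).1 ≤ (fEx x').1 ∧ (fEx x).2 ≤ (fEx x').2 ∧ fEx x ≠ fEx x'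

/-- The efficient set of the problem over feasible set `X`. -/
def EffEx (X : Set (ℝ × ℝ)) : Set (ℝ × ℝ) :=
  {x | x ∈ X ∧ ¬ ∃ x' ∈ X, DomEx x x'}

/-- The box `{x : a ≤ x₁ ≤ b, a ≤ x₂ ≤ b}`. -/
def boxEx (a b : ℝ) : Set (ℝ × ℝ) :=
  {x | a ≤ x.1 ∧ x.1 ≤ b ∧ a ≤ x.2 ∧ x.2 ≤ b}

lemma eff_box (a b : ℝ) (h1 : a ≤ 1) (h2 : 5 ≤ b) :
    EffEx (boxEx a b) = {p : ℝ × ℝ | ∃ t ∈ Set.Icc (0 : ℝ) 1, p = (3 + t, 4 - 3 * t)} := by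
  ext x
  obtain ⟨x1, x2⟩ := x
  simp only [EffEx, boxEx, DomEx, fEx, Set.mem_setOf_eq, Set.mem_Icc, Prod.mk.injEq]
  constructor
  · rintro ⟨⟨ha1, hb1, ha2, hb2⟩, hnd⟩
    by_contra hseg
    push_neg at hseg
    apply hnd
    rcases lt_or_ge (x1 - 3*x2 + 9) 0 with hd | hd
    · -- dominated by (3,4)
      refine ⟨(3, 4), ⟨by dsimp only; linarith, by dsimp only; linarith, by dsimp only; linarith, by dsimp only; linarith⟩, ?_, ?_, ?_⟩
      · dsimp only
        nlinarith [sq_nonneg (3*(x1-3) + (x2-4)), mul_pos (neg_pos.2 hd) (neg_pos.2 hd)]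
      · dsimp only
        nlinarith [sq_nonneg (x1-3), sq_nonneg (x2-4)]
      · intro h
        have h' := congrArg Prod.fst h
        dsimp only at h'
        nlinarith [sq_nonneg (3*(x1-3) + (x2-4)), mul_pos (neg_pos.2 hd) (neg_pos.2 hd)]
    rcases lt_or_ge 10 (x1 - 3*x2 + 9) with hd2 | hd2
    · -- dominated by (4,1)
      refine ⟨(4, 1), ⟨by dsimp only; linarith, by dsimp only; linarith, by dsimp only; linarith, by dsimp only; linarith⟩, ?_, ?_, ?_⟩
      · dsimp only
        nlinarith [sq_nonneg (3*(x1-3) + (x2-4))]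
      · dsimp only
        nlinarith [sq_nonneg (3*(x1-3) + (x2-4)), sq_nonneg (x1 - 3*x2 - 1)]
      · intro h
        have h' := congrArg Prod.fst h
        dsimp only at h'
        nlinarith [sq_nonneg (3*(x1-3) + (x2-4))]
    · -- dominated by projection (3+t, 4-3t), t = d/10
      set t : ℝ := (x1 - 3*x2 + 9)/10 with htdef
      have ht0 : 0 ≤ t := by unfold t; linarith
      have ht1 : t ≤ 1 := by unfold t; linarith
      have h10 : 10 * t = x1 - 3*x2 + 9 := by unfold t; ring
      have hw : x2 - 4 + 3*t ≠ 0 := by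
        intro hw0
        exact hseg t ⟨ht0, ht1⟩ (by linarith) (by linarith)
      have hw2 : 0 < (x2 - 4 + 3*t)^2 := by positivity
      refine ⟨(3 + t, 4 - 3*t), ⟨by dsimp only; linarith, by dsimp only; linarith, by dsimp only; linarith, by dsimp only; linarith⟩, ?_, ?_, ?_⟩
      · dsimp only
        nlinarith [hw2, sq_nonneg (10*t - (x1 - 3*x2 + 9))]
      · dsimp only
        nlinarith [hw2, sq_nonneg (10*t - (x1 - 3*x2 + 9))]
      · intro h
        have h' := congrArg Prod.fst h
        dsimp only at h'
        nlinarith [hw2, sq_nonneg (10*t - (x1 - 3*x2 + 9))]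

  · rintro ⟨t, ⟨ht0, ht1⟩, hx1, hx2⟩
    subst hx1; subst hx2
    refine ⟨⟨by linarith, by linarith, by linarith, by linarith⟩, ?_⟩
    rintro ⟨⟨y1, y2⟩, ⟨hya1, hyb1, hya2, hyb2⟩, hf1, hf2, hne⟩
    dsimp only at hf1 hf2 hne
    apply hne
    have k1 : (y1 - 3 - t)^2 + (y2 - 4 + 3*t)^2 + 2*t*((y1 - 3 - t) - 3*(y2 - 4 + 3*t)) ≤ 0 := by
      linarith [hf1]
    have k2 : (y1 - 3 - t)^2 + (y2 - 4 + 3*t)^2 - 2*(1-t)*((y1 - 3 - t) - 3*(y2 - 4 + 3*t)) ≤ 0 := by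
      linarith [hf2]
    have c1 : (1-t) * ((y1 - 3 - t)^2 + (y2 - 4 + 3*t)^2 + 2*t*((y1 - 3 - t) - 3*(y2 - 4 + 3*t))) ≤ 0 :=
      mul_nonpos_of_nonneg_of_nonpos (by linarith) k1
    have c2 : t * ((y1 - 3 - t)^2 + (y2 - 4 + 3*t)^2 - 2*(1-t)*((y1 - 3 - t) - 3*(y2 - 4 + 3*t))) ≤ 0 :=
      mul_nonpos_of_nonneg_of_nonpos ht0 k2
    have key : (y1 - 3 - t)^2 + (y2 - 4 + 3*t)^2 ≤ 0 := by linarith [c1, c2]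
    have hq1 : (y1 - 3 - t)^2 = 0 := le_antisymm (by linarith [sq_nonneg (y2 - 4 + 3*t)]) (sq_nonneg _)
    have hq2 : (y2 - 4 + 3*t)^2 = 0 := le_antisymm (by linarith [sq_nonneg (y1 - 3 - t)]) (sq_nonneg _)
    have he1 : y1 = 3 + t := by have := pow_eq_zero_iff (n := 2) (by norm_num) |>.mp hq1; linarith
    have he2 : y2 = 4 - 3*t := by have := pow_eq_zero_iff (n := 2) (by norm_num) |>.mp hq2; linarith
    subst he1; subst he2
    norm_num

theorem stmt14 (a b : ℝ) (ha : a < 1) (hb : 5 < b) :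
    EffEx (boxEx a b) =
        {p : ℝ × ℝ | ∃ t ∈ Set.Icc (0 : ℝ) 1, p = (3 + t, 4 - 3 * t)} ∧
    EffEx (boxEx a b) = EffEx (boxEx 1 5) ∧
    fEx '' EffEx (boxEx a b) = fEx '' EffEx (boxEx 1 5) := by
  have e1 := eff_box a b ha.le hb.le
  have e2 := eff_box 1 5 le_rfl le_rfl
  exact ⟨e1, by rw [e1, e2], by rw [e1, e2]⟩
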